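/- arXiv:2301.12044 — 2 statements merged into one kernel-verified Lean document; each statement's English description precedes it below -/
import Mathlib

section
/- Let W, X, Y be disjoint finite sets each of size m with sizes s(a) ∈ ℤ⁺ and B ∈ ℤ⁺; set M = 1 + B + Σ_a s(a), and define Z-values as: Z_w = s(w)+M for w∈W, Z_x = s(x)+3M for x∈X, Z_y = B−s(y)+4M for y∈Y. If a three-element subset {a,b,c} of W∪X∪Y satisfies Z_a + Z_b − Z_c = 0, then necessarily c ∈ Y, {a,b} contains exactly one element of W and one element of X, and s(a)+s(b)+s(c) = B. -/
/-- Backward (soundness) direction of the reduction: if three distinct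
elements `a, b, c` of `W ∪ X ∪ Y` satisfy `Z_a + Z_b − Z_c = 0`, then `c ∈ Y`,
`{a, b}` contains exactly one element of `W` and one of `X`, and
`s(a) + s(b) + s(c) = B`. -/
theorem reduction_backward {α : Type*} [DecidableEq α]
    (W X Y : Finset α) (m : ℕ)
    (hWX : Disjoint W X) (hWY : Disjoint W Y) (hXY : Disjoint X Y)
    (hW : W.card = m) (hX : X.card = m) (hY : Y.card = m)
    (s : α → ℤ) (hs : ∀ a ∈ W ∪ X ∪ Y, 0 < s a)
    (B : ℤ) (hB : 0 < B)
    (M : ℤ) (hM : M = 1 + B + ∑ a ∈ W ∪ X ∪ Y, s a)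
    (Z : α → ℤ)
    (hZW : ∀ w ∈ W, Z w = s w + M)
    (hZX : ∀ x ∈ X, Z x = s x + 3 * M)
    (hZY : ∀ y ∈ Y, Z y = B - s y + 4 * M)
    (a b c : α)
    (ha : a ∈ W ∪ X ∪ Y) (hb : b ∈ W ∪ X ∪ Y) (hc : c ∈ W ∪ X ∪ Y)
    (hab : a ≠ b) (hac : a ≠ c) (hbc : b ≠ c)
    (h : Z a + Z b - Z c = 0) :
    c ∈ Y ∧ ((a ∈ W ∧ b ∈ X) ∨ (a ∈ X ∧ b ∈ W)) ∧ s a + s b + s c = B := by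
  have hsub : ({a, b, c} : Finset α) ⊆ W ∪ X ∪ Y := by
    intro x hx
    simp only [Finset.mem_insert, Finset.mem_singleton] at hx
    rcases hx with rfl | rfl | rfl <;> assumption
  have hsum3 : s a + s b + s c ≤ ∑ x ∈ W ∪ X ∪ Y, s x := by
    have h1 : s a + s b + s c = ∑ x ∈ ({a, b, c} : Finset α), s x := by
      rw [Finset.sum_insert (by simp [hab, hac]),
        Finset.sum_insert (by simp [hbc]), Finset.sum_singleton]
      ring
    rw [h1]
    exact Finset.sum_le_sum_of_subset_of_nonneg hsub
      (fun x hx _ => le_of_lt (hs x hx))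
  have ha' := hs a ha
  have hb' := hs b hb
  have hc' := hs c hc
  subst hM
  simp only [Finset.mem_union] at ha hb hc
  rcases ha with (haW | haX) | haY <;> rcases hb with (hbW | hbX) | hbY <;>
    rcases hc with (hcW | hcX) | hcY <;>
  [rw [hZW a haW, hZW b hbW, hZW c hcW] at h;
   rw [hZW a haW, hZW b hbW, hZX c hcX] at h;
   rw [hZW a haW, hZW b hbW, hZY c hcY] at h;
   rw [hZW a haW, hZX b hbX, hZW c hcW] at h;
   rw [hZW a haW, hZX b hbX, hZX c hcX] at h;
   rw [hZW a haW, hZX b hbX, hZY c hcY] at h;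
   rw [hZW a haW, hZY b hbY, hZW c hcW] at h;
   rw [hZW a haW, hZY b hbY, hZX c hcX] at h;
   rw [hZW a haW, hZY b hbY, hZY c hcY] at h;
   rw [hZX a haX, hZW b hbW, hZW c hcW] at h;
   rw [hZX a haX, hZW b hbW, hZX c hcX] at h;
   rw [hZX a haX, hZW b hbW, hZY c hcY] at h;
   rw [hZX a haX, hZX b hbX, hZW c hcW] at h;
   rw [hZX a haX, hZX b hbX, hZX c hcX] at h;
   rw [hZX a haX, hZX b hbX, hZY c hcY] at h;
   rw [hZX a haX, hZY b hbY, hZW c hcW] at h;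
   rw [hZX a haX, hZY b hbY, hZX c hcX] at h;
   rw [hZX a haX, hZY b hbY, hZY c hcY] at h;
   rw [hZY a haY, hZW b hbW, hZW c hcW] at h;
   rw [hZY a haY, hZW b hbW, hZX c hcX] at h;
   rw [hZY a haY, hZW b hbW, hZY c hcY] at h;
   rw [hZY a haY, hZX b hbX, hZW c hcW] at h;
   rw [hZY a haY, hZX b hbX, hZX c hcX] at h;
   rw [hZY a haY, hZX b hbX, hZY c hcY] at h;
   rw [hZY a haY, hZY b hbY, hZW c hcW] at h;
   rw [hZY a haY, hZY b hbY, hZX c hcX] at h;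
   rw [hZY a haY, hZY b hbY, hZY c hcY] at h] <;>
  first
    | exact ⟨hcY, Or.inl ⟨haW, hbX⟩, by linarith⟩
    | exact ⟨hcY, Or.inr ⟨haX, hbW⟩, by linarith⟩
    | (exfalso; linarith)
end

section
/- Let W, X, Y, s, B, M and Z be as in the 3-dimensional-matching reduction. Then W ∪ X ∪ Y can be partitioned into m disjoint triples A_1,...,A_m each containing exactly one element of W, X, Y with Σ_{a∈A_i} s(a) = B, if and only if the set 𝒢 = W∪X∪Y can be partitioned into m disjoint three-element sets G_1,...,G_m with score(G_i) = 0 for all i, where score(G) = min over two-way splits G₊⊔G₋ = G of (Σ_{G₊} Z_g − Σ_{G₋} Z_g)². -/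
/-- The optimal balancing loss of a geo set `G` (integer values). -/
noncomputable def score {α : Type*} [DecidableEq α] (Z : α → ℤ) (G : Finset α) : ℤ :=
  G.powerset.inf' ⟨∅, Finset.empty_mem_powerset G⟩
    (fun S => ((∑ g ∈ S, Z g) - ∑ g ∈ G \ S, Z g) ^ 2)

private lemma key (B M s1 s2 s3 e1 e2 e3 Z1 Z2 Z3 c1 c2 c3 : ℤ)
    (hB : 0 < B)
    (h1 : 1 ≤ s1) (h2 : 1 ≤ s2) (h3 : 1 ≤ s3)
    (hsum : s1 + s2 + s3 ≤ M - 1 - B)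
    (he1 : e1 = 1 ∨ e1 = -1) (he2 : e2 = 1 ∨ e2 = -1) (he3 : e3 = 1 ∨ e3 = -1)
    (hc1 : (c1 = 1 ∧ Z1 = s1 + M) ∨ (c1 = 3 ∧ Z1 = s1 + 3*M) ∨ (c1 = 4 ∧ Z1 = B - s1 + 4*M))
    (hc2 : (c2 = 1 ∧ Z2 = s2 + M) ∨ (c2 = 3 ∧ Z2 = s2 + 3*M) ∨ (c2 = 4 ∧ Z2 = B - s2 + 4*M))
    (hc3 : (c3 = 1 ∧ Z3 = s3 + M) ∨ (c3 = 3 ∧ Z3 = s3 + 3*M) ∨ (c3 = 4 ∧ Z3 = B - s3 + 4*M))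
    (heq : e1 * Z1 + e2 * Z2 + e3 * Z3 = 0) :
    ((c1 = 1 ∧ c2 = 3 ∧ c3 = 4) ∨ (c1 = 1 ∧ c2 = 4 ∧ c3 = 3) ∨ (c1 = 3 ∧ c2 = 1 ∧ c3 = 4) ∨
     (c1 = 3 ∧ c2 = 4 ∧ c3 = 1) ∨ (c1 = 4 ∧ c2 = 1 ∧ c3 = 3) ∨ (c1 = 4 ∧ c2 = 3 ∧ c3 = 1)) ∧
    s1 + s2 + s3 = B := by
  rcases he1 with rfl | rfl <;> rcases he2 with rfl | rfl <;> rcases he3 with rfl | rfl <;>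
    rcases hc1 with ⟨rfl, rfl⟩ | ⟨rfl, rfl⟩ | ⟨rfl, rfl⟩ <;>
    rcases hc2 with ⟨rfl, rfl⟩ | ⟨rfl, rfl⟩ | ⟨rfl, rfl⟩ <;>
    rcases hc3 with ⟨rfl, rfl⟩ | ⟨rfl, rfl⟩ | ⟨rfl, rfl⟩ <;>
    omega

private lemma pick {P Q R : Prop} {c : ℤ}
    (h : (c = 1 ∧ P) ∨ (c = 3 ∧ Q) ∨ (c = 4 ∧ R)) :
    (c = 1 → P) ∧ (c = 3 → Q) ∧ (c = 4 → R) := by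
  rcases h with ⟨rfl, h⟩ | ⟨rfl, h⟩ | ⟨rfl, h⟩ <;>
    refine ⟨fun hc => ?_, fun hc => ?_, fun hc => ?_⟩ <;>
    first | exact h | omega

private lemma inter_card {α : Type*} [DecidableEq α] (W X Y : Finset α)
    (hWX : Disjoint W X) (hWY : Disjoint W Y) (hXY : Disjoint X Y)
    (G : Finset α) (a b c : α)
    (ha : a ∈ W) (hb : b ∈ X) (hc : c ∈ Y) (hG : G = {a, b, c}) (s : α → ℤ) :
    (G ∩ W).card = 1 ∧ (G ∩ X).card = 1 ∧ (G ∩ Y).card = 1 ∧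
      ∑ g ∈ G, s g = s a + s b + s c := by
  have haX : a ∉ X := fun h => Finset.disjoint_left.mp hWX ha h
  have haY : a ∉ Y := fun h => Finset.disjoint_left.mp hWY ha h
  have hbW : b ∉ W := fun h => Finset.disjoint_left.mp hWX h hb
  have hbY : b ∉ Y := fun h => Finset.disjoint_left.mp hXY hb h
  have hcW : c ∉ W := fun h => Finset.disjoint_left.mp hWY h hc
  have hcX : c ∉ X := fun h => Finset.disjoint_left.mp hXY h hc
  have hab : a ≠ b := fun h => hbW (h ▸ ha)
  have hac : a ≠ c := fun h => hcW (h ▸ ha)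
  have hbc : b ≠ c := fun h => hcX (h ▸ hb)
  subst hG
  have hIW : ({a, b, c} : Finset α) ∩ W = {a} := by
    ext x
    simp only [Finset.mem_inter, Finset.mem_insert, Finset.mem_singleton]
    constructor
    · rintro ⟨rfl | rfl | rfl, h⟩
      · rfl
      · exact absurd h hbW
      · exact absurd h hcW
    · rintro rfl; exact ⟨Or.inl rfl, ha⟩
  have hIX : ({a, b, c} : Finset α) ∩ X = {b} := by
    ext x
    simp only [Finset.mem_inter, Finset.mem_insert, Finset.mem_singleton]
    constructor
    · rintro ⟨rfl | rfl | rfl, h⟩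
      · exact absurd h haX
      · rfl
      · exact absurd h hcX
    · rintro rfl; exact ⟨Or.inr (Or.inl rfl), hb⟩
  have hIY : ({a, b, c} : Finset α) ∩ Y = {c} := by
    ext x
    simp only [Finset.mem_inter, Finset.mem_insert, Finset.mem_singleton]
    constructor
    · rintro ⟨rfl | rfl | rfl, h⟩
      · exact absurd h haY
      · exact absurd h hbY
      · rfl
    · rintro rfl; exact ⟨Or.inr (Or.inr rfl), hc⟩
  refine ⟨by rw [hIW]; simp, by rw [hIX]; simp, by rw [hIY]; simp, ?_⟩
  rw [Finset.sum_insert (by simp [hab, hac]), Finset.sum_insert (by simp [hbc]),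
    Finset.sum_singleton]
  ring

set_option maxHeartbeats 1600000 in
/-- Correctness of the reduction from numerical 3-dimensional matching to the
supergeo design problem: `W ∪ X ∪ Y` admits a perfect numerical 3-dimensional
matching iff it can be partitioned into `m` triples each of zero score. -/
theorem reduction_correct {α : Type*} [DecidableEq α]
    (W X Y : Finset α) (m : ℕ)
    (hWX : Disjoint W X) (hWY : Disjoint W Y) (hXY : Disjoint X Y)
    (hW : W.card = m) (hX : X.card = m) (hY : Y.card = m)
    (s : α → ℤ) (hs : ∀ a ∈ W ∪ X ∪ Y, 0 < s a)
    (B : ℤ) (hB : 0 < B)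
    (M : ℤ) (hM : M = 1 + B + ∑ a ∈ W ∪ X ∪ Y, s a)
    (Z : α → ℤ)
    (hZW : ∀ w ∈ W, Z w = s w + M)
    (hZX : ∀ x ∈ X, Z x = s x + 3 * M)
    (hZY : ∀ y ∈ Y, Z y = B - s y + 4 * M) :
    (∃ A : Fin m → Finset α,
        (∀ i j, i ≠ j → Disjoint (A i) (A j)) ∧
        (Finset.univ.sup A = W ∪ X ∪ Y) ∧
        (∀ i, (A i ∩ W).card = 1 ∧ (A i ∩ X).card = 1 ∧ (A i ∩ Y).card = 1 ∧
          ∑ a ∈ A i, s a = B)) ↔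
    (∃ G : Fin m → Finset α,
        (∀ i j, i ≠ j → Disjoint (G i) (G j)) ∧
        (Finset.univ.sup G = W ∪ X ∪ Y) ∧
        (∀ i, (G i).card = 3 ∧ score Z (G i) = 0)) := by
  constructor
  · rintro ⟨A, hdisj, hsup, hA⟩
    refine ⟨A, hdisj, hsup, fun i => ?_⟩
    obtain ⟨hw1, hx1, hy1, hsB⟩ := hA i
    have hsub : A i ⊆ W ∪ X ∪ Y := by
      have h : A i ≤ Finset.univ.sup A := Finset.le_sup (Finset.mem_univ i)
      rw [hsup] at h
      exact Finset.le_iff_subset.mp h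
    obtain ⟨w, hwEq⟩ := Finset.card_eq_one.mp hw1
    obtain ⟨x, hxEq⟩ := Finset.card_eq_one.mp hx1
    obtain ⟨y, hyEq⟩ := Finset.card_eq_one.mp hy1
    have hwW : w ∈ W := (Finset.mem_inter.mp (hwEq ▸ Finset.mem_singleton_self w)).2
    have hwA : w ∈ A i := (Finset.mem_inter.mp (hwEq ▸ Finset.mem_singleton_self w)).1
    have hxX : x ∈ X := (Finset.mem_inter.mp (hxEq ▸ Finset.mem_singleton_self x)).2
    have hxA : x ∈ A i := (Finset.mem_inter.mp (hxEq ▸ Finset.mem_singleton_self x)).1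
    have hyY : y ∈ Y := (Finset.mem_inter.mp (hyEq ▸ Finset.mem_singleton_self y)).2
    have hyA : y ∈ A i := (Finset.mem_inter.mp (hyEq ▸ Finset.mem_singleton_self y)).1
    have hwx : w ≠ x := fun h => Finset.disjoint_left.mp hWX hwW (h ▸ hxX)
    have hwy : w ≠ y := fun h => Finset.disjoint_left.mp hWY hwW (h ▸ hyY)
    have hxy : x ≠ y := fun h => Finset.disjoint_left.mp hXY hxX (h ▸ hyY)
    have hAeq : A i = {w, x, y} := by
      ext g
      simp only [Finset.mem_insert, Finset.mem_singleton]
      constructor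
      · intro hg
        have hu := hsub hg
        rw [Finset.mem_union, Finset.mem_union] at hu
        rcases hu with (h | h) | h
        · have : g ∈ A i ∩ W := Finset.mem_inter.mpr ⟨hg, h⟩
          rw [hwEq, Finset.mem_singleton] at this
          exact Or.inl this
        · have : g ∈ A i ∩ X := Finset.mem_inter.mpr ⟨hg, h⟩
          rw [hxEq, Finset.mem_singleton] at this
          exact Or.inr (Or.inl this)
        · have : g ∈ A i ∩ Y := Finset.mem_inter.mpr ⟨hg, h⟩
          rw [hyEq, Finset.mem_singleton] at this
          exact Or.inr (Or.inr this)
      · rintro (rfl | rfl | rfl)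
        · exact hwA
        · exact hxA
        · exact hyA
    have hcard3 : (A i).card = 3 := by
      rw [hAeq]
      rw [Finset.card_insert_of_notMem (by simp [hwx, hwy]),
        Finset.card_insert_of_notMem (by simp [hxy]), Finset.card_singleton]
    have hsxyz : s w + s x + s y = B := by
      rw [hAeq] at hsB
      rw [Finset.sum_insert (by simp [hwx, hwy]), Finset.sum_insert (by simp [hxy]),
        Finset.sum_singleton] at hsB
      linarith
    refine ⟨hcard3, le_antisymm ?_ ?_⟩
    · have hmem : ({y} : Finset α) ∈ (A i).powerset :=
        Finset.mem_powerset.mpr (by intro g hg; rw [Finset.mem_singleton] at hg; exact hg ▸ hyA)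
      have hle := Finset.inf'_le
        (fun S => ((∑ g ∈ S, Z g) - ∑ g ∈ A i \ S, Z g) ^ 2) hmem
      have hdiffset : A i \ {y} = {w, x} := by
        rw [hAeq]
        ext g
        simp only [Finset.mem_sdiff, Finset.mem_insert, Finset.mem_singleton]
        constructor
        · rintro ⟨rfl | rfl | rfl, h⟩
          · exact Or.inl rfl
          · exact Or.inr rfl
          · exact absurd rfl h
        · rintro (rfl | rfl)
          · exact ⟨Or.inl rfl, hwy⟩
          · exact ⟨Or.inr (Or.inl rfl), hxy⟩
      have hval : ((∑ g ∈ ({y} : Finset α), Z g) - ∑ g ∈ A i \ {y}, Z g) ^ 2 = 0 := by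
        rw [hdiffset, Finset.sum_singleton, Finset.sum_pair hwx,
          hZW w hwW, hZX x hxX, hZY y hyY]
        have : B - s y + 4 * M - (s w + M + (s x + 3 * M)) = 0 := by linarith
        rw [this]; ring
      rw [score]
      calc _ ≤ _ := hle
        _ = 0 := hval
    · rw [score]
      exact Finset.le_inf' _ _ (fun S _ => sq_nonneg _)
  · rintro ⟨G, hdisj, hsup, hG⟩
    refine ⟨G, hdisj, hsup, fun i => ?_⟩
    obtain ⟨hcard, hscore⟩ := hG i
    have hsub : G i ⊆ W ∪ X ∪ Y := by
      have h : G i ≤ Finset.univ.sup G := Finset.le_sup (Finset.mem_univ i)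
      rw [hsup] at h
      exact Finset.le_iff_subset.mp h
    obtain ⟨g1, g2, g3, h12, h13, h23, hGi⟩ := Finset.card_eq_three.mp hcard
    have hg1m : g1 ∈ W ∪ X ∪ Y := hsub (by rw [hGi]; simp)
    have hg2m : g2 ∈ W ∪ X ∪ Y := hsub (by rw [hGi]; simp)
    have hg3m : g3 ∈ W ∪ X ∪ Y := hsub (by rw [hGi]; simp)
    -- extract a zero-balanced split from the score
    obtain ⟨S, hS, hSval⟩ := Finset.exists_mem_eq_inf'
      (⟨∅, Finset.empty_mem_powerset (G i)⟩ : (G i).powerset.Nonempty)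
      (fun S => ((∑ g ∈ S, Z g) - ∑ g ∈ G i \ S, Z g) ^ 2)
    rw [score] at hscore
    have hsq : ((∑ g ∈ S, Z g) - ∑ g ∈ G i \ S, Z g) ^ 2 = 0 := by
      rw [← hSval]; exact hscore
    have hdiff : (∑ g ∈ S, Z g) - ∑ g ∈ G i \ S, Z g = 0 :=
      sq_eq_zero_iff.mp hsq
    have hSsub : S ⊆ G i := Finset.mem_powerset.mp hS
    set e : α → ℤ := fun g => if g ∈ S then 1 else -1 with he
    have hsplit : ∑ g ∈ G i, (if g ∈ S then Z g else - Z g)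
        = (∑ g ∈ S, Z g) - ∑ g ∈ G i \ S, Z g := by
      rw [Finset.sum_ite, Finset.sum_neg_distrib, ← sub_eq_add_neg]
      congr 1
      · congr 1
        rw [Finset.filter_mem_eq_inter, Finset.inter_eq_right.mpr hSsub]
      · congr 1
        rw [Finset.sdiff_eq_filter]
    have hexp : ∑ g ∈ G i, (if g ∈ S then Z g else - Z g)
        = e g1 * Z g1 + e g2 * Z g2 + e g3 * Z g3 := by
      rw [hGi, Finset.sum_insert (by simp [h12, h13]),
        Finset.sum_insert (by simp [h23]), Finset.sum_singleton, he]
      simp only []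
      split_ifs <;> ring
    have heq : e g1 * Z g1 + e g2 * Z g2 + e g3 * Z g3 = 0 := by
      rw [← hexp, hsplit, hdiff]
    have hepm : ∀ g, e g = 1 ∨ e g = -1 := by
      intro g
      by_cases h : g ∈ S <;> simp [he, h]
    -- the class function
    set c : α → ℤ := fun g => if g ∈ W then 1 else if g ∈ X then 3 else 4 with hcdef
    have hcgen : ∀ g ∈ W ∪ X ∪ Y,
        (c g = 1 ∧ (Z g = s g + M ∧ g ∈ W)) ∨ (c g = 3 ∧ (Z g = s g + 3*M ∧ g ∈ X)) ∨
        (c g = 4 ∧ (Z g = B - s g + 4*M ∧ g ∈ Y)) := by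
      intro g hg
      rw [Finset.mem_union, Finset.mem_union] at hg
      rcases hg with (h | h) | h
      · exact Or.inl ⟨by simp [hcdef, h], hZW g h, h⟩
      · have hgW : g ∉ W := fun h' => Finset.disjoint_left.mp hWX h' h
        exact Or.inr (Or.inl ⟨by simp [hcdef, h, hgW], hZX g h, h⟩)
      · have hgW : g ∉ W := fun h' => Finset.disjoint_left.mp hWY h' h
        have hgX : g ∉ X := fun h' => Finset.disjoint_left.mp hXY h' h
        exact Or.inr (Or.inr ⟨by simp [hcdef, hgW, hgX], hZY g h, h⟩)
    have hs1 : 1 ≤ s g1 := hs g1 hg1m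
    have hs2 : 1 ≤ s g2 := hs g2 hg2m
    have hs3 : 1 ≤ s g3 := hs g3 hg3m
    have hsumle : s g1 + s g2 + s g3 ≤ M - 1 - B := by
      have hsub3 : ({g1, g2, g3} : Finset α) ⊆ W ∪ X ∪ Y := by rw [← hGi]; exact hsub
      have h1 : ∑ g ∈ ({g1, g2, g3} : Finset α), s g ≤ ∑ g ∈ W ∪ X ∪ Y, s g :=
        Finset.sum_le_sum_of_subset_of_nonneg hsub3
          (fun g hg _ => le_of_lt (hs g hg))
      rw [Finset.sum_insert (by simp [h12, h13]), Finset.sum_insert (by simp [h23]),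
        Finset.sum_singleton] at h1
      omega
    have hkey := key B M (s g1) (s g2) (s g3) (e g1) (e g2) (e g3)
      (Z g1) (Z g2) (Z g3) (c g1) (c g2) (c g3) hB hs1 hs2 hs3 hsumle
      (hepm g1) (hepm g2) (hepm g3)
      ((hcgen g1 hg1m).imp (fun h => ⟨h.1, h.2.1⟩)
        (fun h => h.imp (fun h => ⟨h.1, h.2.1⟩) (fun h => ⟨h.1, h.2.1⟩)))
      ((hcgen g2 hg2m).imp (fun h => ⟨h.1, h.2.1⟩)
        (fun h => h.imp (fun h => ⟨h.1, h.2.1⟩) (fun h => ⟨h.1, h.2.1⟩)))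
      ((hcgen g3 hg3m).imp (fun h => ⟨h.1, h.2.1⟩)
        (fun h => h.imp (fun h => ⟨h.1, h.2.1⟩) (fun h => ⟨h.1, h.2.1⟩)))
      heq
    obtain ⟨hperm, hsum⟩ := hkey
    have hp1 := pick (hcgen g1 hg1m)
    have hp2 := pick (hcgen g2 hg2m)
    have hp3 := pick (hcgen g3 hg3m)
    rcases hperm with ⟨hc1, hc2, hc3⟩ | ⟨hc1, hc2, hc3⟩ | ⟨hc1, hc2, hc3⟩ |
      ⟨hc1, hc2, hc3⟩ | ⟨hc1, hc2, hc3⟩ | ⟨hc1, hc2, hc3⟩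
    · obtain ⟨h1a, h1b⟩ := hp1.1 hc1
      obtain ⟨h2a, h2b⟩ := hp2.2.1 hc2
      obtain ⟨h3a, h3b⟩ := hp3.2.2 hc3
      obtain ⟨q1, q2, q3, q4⟩ := inter_card W X Y hWX hWY hXY (G i) g1 g2 g3 h1b h2b h3b hGi s
      exact ⟨q1, q2, q3, by omega⟩
    · obtain ⟨h1a, h1b⟩ := hp1.1 hc1
      obtain ⟨h2a, h2b⟩ := hp2.2.2 hc2
      obtain ⟨h3a, h3b⟩ := hp3.2.1 hc3
      obtain ⟨q1, q2, q3, q4⟩ := inter_card W X Y hWX hWY hXY (G i) g1 g3 g2 h1b h3b h2b (by rw [hGi, Finset.pair_comm g2 g3]) s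
      exact ⟨q1, q2, q3, by omega⟩
    · obtain ⟨h1a, h1b⟩ := hp1.2.1 hc1
      obtain ⟨h2a, h2b⟩ := hp2.1 hc2
      obtain ⟨h3a, h3b⟩ := hp3.2.2 hc3
      obtain ⟨q1, q2, q3, q4⟩ := inter_card W X Y hWX hWY hXY (G i) g2 g1 g3 h2b h1b h3b (by rw [hGi, Finset.insert_comm g1 g2]) s
      exact ⟨q1, q2, q3, by omega⟩
    · obtain ⟨h1a, h1b⟩ := hp1.2.1 hc1
      obtain ⟨h2a, h2b⟩ := hp2.2.2 hc2
      obtain ⟨h3a, h3b⟩ := hp3.1 hc3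
      obtain ⟨q1, q2, q3, q4⟩ := inter_card W X Y hWX hWY hXY (G i) g3 g1 g2 h3b h1b h2b (by rw [hGi, Finset.pair_comm g2 g3, Finset.insert_comm g1 g3]) s
      exact ⟨q1, q2, q3, by omega⟩
    · obtain ⟨h1a, h1b⟩ := hp1.2.2 hc1
      obtain ⟨h2a, h2b⟩ := hp2.1 hc2
      obtain ⟨h3a, h3b⟩ := hp3.2.1 hc3
      obtain ⟨q1, q2, q3, q4⟩ := inter_card W X Y hWX hWY hXY (G i) g2 g3 g1 h2b h3b h1b (by rw [hGi, Finset.insert_comm g1 g2, Finset.pair_comm g1 g3]) s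
      exact ⟨q1, q2, q3, by omega⟩
    · obtain ⟨h1a, h1b⟩ := hp1.2.2 hc1
      obtain ⟨h2a, h2b⟩ := hp2.2.1 hc2
      obtain ⟨h3a, h3b⟩ := hp3.1 hc3
      obtain ⟨q1, q2, q3, q4⟩ := inter_card W X Y hWX hWY hXY (G i) g3 g2 g1 h3b h2b h1b (by rw [hGi, Finset.insert_comm g1 g2, Finset.pair_comm g1 g3, Finset.insert_comm g2 g3]) s
      exact ⟨q1, q2, q3, by omega⟩
end
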